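/- arXiv:2011.05274 — 3 statements merged into one kernel-verified Lean document; each statement's English description precedes it below -/
import Mathlib

section
/- (Theorem 1(i)) Along any solution of the closed-loop multi-sUAS system, the Hamiltonian H = V_p + V_k + V_b is differentiable in time and satisfies Ḣ(t) = −Σ_{i=1}^N K_i ‖q̇_i(t) − v̂‖² ≤ 0 for all t > t₀; in particular H is nonincreasing along trajectories. -/
/-! Differentiating `H`, the power `Σᵢ ⟪Fᵢ, q̇ᵢ⟫` of the potential forces cancels against their
contribution `-Σᵢ ⟪q̇ᵢ - v̂, Fᵢ⟫` to the kinetic power, up to the power `Σᵢ ⟪Fᵢ, v̂⟫` they would exert at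
the reference velocity. That remainder vanishes: pair forces are antisymmetric in `i, j`, and
boundary forces are normal to planes parallel to `v̂`. Only the damping term remains. -/

open Finset RealInnerProductSpace

variable {E : Type*} [NormedAddCommGroup E] {ι κ : Type*} [Fintype ι] [Fintype κ]

noncomputable def sigmaNorm (ε : ℝ) (z : E) : ℝ :=
  (1 / ε) * (Real.sqrt (1 + ε * ‖z‖ ^ 2) - 1)

/-- `pairGain ε φ z • z = φ ‖z‖_σ • ∇‖z‖_σ` is the pair force of the control law. -/
noncomputable def pairGain (ε : ℝ) (φ : ℝ → ℝ) (z : E) : ℝ :=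
  φ (sigmaNorm ε z) * (Real.sqrt (1 + ε * ‖z‖ ^ 2))⁻¹

theorem pairGain_sub_comm (ε : ℝ) (φ : ℝ → ℝ) (x y : E) :
    pairGain ε φ (x - y) = pairGain ε φ (y - x) := by
  simp only [pairGain, sigmaNorm, norm_sub_rev x y]

variable [InnerProductSpace ℝ E]

theorem HasDerivAt.sigmaNorm {ε : ℝ} (hε : 0 < ε) {z : ℝ → E} {z' : E} {t : ℝ}
    (hz : HasDerivAt z z' t) :
    HasDerivAt (fun s => sigmaNorm ε (z s))
      ((Real.sqrt (1 + ε * ‖z t‖ ^ 2))⁻¹ * ⟪z t, z'⟫) t := by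
  have hpos : 0 < 1 + ε * ‖z t‖ ^ 2 := by positivity
  have hsqrt := (((hz.norm_sq.const_mul ε).const_add 1).sqrt hpos.ne').sub_const 1
  refine (hsqrt.const_mul (1 / ε)).congr_deriv ?_
  have : Real.sqrt (1 + ε * ‖z t‖ ^ 2) ≠ 0 := (Real.sqrt_pos.mpr hpos).ne'
  field_simp

section PairInteraction

variable [DecidableEq ι]

theorem sum_sum_erase_comm {M : Type*} [AddCommMonoid M] (G : ι → ι → M) :
    ∑ i, ∑ j ∈ univ.erase i, G i j = ∑ i, ∑ j ∈ univ.erase i, G j i :=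
  sum_comm' fun i j => by simp only [mem_univ, mem_erase, and_true, true_and, ne_comm]

theorem sum_sum_erase_mul_inner_sub_sub {c : ι → ι → ℝ} (hc : ∀ i j, c i j = c j i)
    (x v : ι → E) :
    ∑ i, ∑ j ∈ univ.erase i, c i j * ⟪x i - x j, v i - v j⟫
      = 2 * ∑ i, ⟪∑ j ∈ univ.erase i, c i j • (x i - x j), v i⟫ := by
  have hsplit : ∀ i j, c i j * ⟪x i - x j, v i - v j⟫
      = c i j * ⟪x i - x j, v i⟫ + c j i * ⟪x j - x i, v j⟫ := fun i j => by
    rw [hc j i, ← neg_sub (x i), inner_neg_left, inner_sub_right]; ring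
  simp only [hsplit, sum_add_distrib, sum_inner, real_inner_smul_left]
  rw [← sum_sum_erase_comm fun i j => c i j * ⟪x i - x j, v i⟫]
  ring

theorem sum_inner_sum_erase_smul_sub_eq_zero {c : ι → ι → ℝ} (hc : ∀ i j, c i j = c j i)
    (x : ι → E) (w : E) :
    ∑ i, ⟪∑ j ∈ univ.erase i, c i j • (x i - x j), w⟫ = 0 := by
  have h := sum_sum_erase_mul_inner_sub_sub hc x fun _ => w
  simp only [sub_self, inner_zero_right, mul_zero, sum_const_zero] at h
  linarith

theorem hasDerivAt_pairPotential {ε : ℝ} (hε : 0 < ε) {ψ φ : ℝ → ℝ}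
    (hψ : ∀ x, HasDerivAt ψ (φ x) x) {q : ι → ℝ → E} {v : ι → E} {t : ℝ}
    (hq : ∀ i, HasDerivAt (q i) (v i) t) :
    HasDerivAt (fun s => (1 / 2) * ∑ i, ∑ j ∈ univ.erase i, ψ (sigmaNorm ε (q i s - q j s)))
      (∑ i, ⟪∑ j ∈ univ.erase i, pairGain ε φ (q i t - q j t) • (q i t - q j t), v i⟫) t := by
  have hpair : ∀ i j, HasDerivAt (fun s => ψ (sigmaNorm ε (q i s - q j s)))
      (pairGain ε φ (q i t - q j t) * ⟪q i t - q j t, v i - v j⟫) t := fun i j => by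
    rw [pairGain, mul_assoc]
    exact (hψ _).comp t (((hq i).sub (hq j)).sigmaNorm hε)
  refine ((HasDerivAt.fun_sum fun i _ => HasDerivAt.fun_sum fun j _ => hpair i j).const_mul
    (1 / 2 : ℝ)).congr_deriv ?_
  rw [sum_sum_erase_mul_inner_sub_sub fun i j => pairGain_sub_comm ε φ (q i t) (q j t)]
  ring

end PairInteraction

theorem hasDerivAt_boundaryPotential {ψb φb : ℝ → ℝ} (hψb : ∀ x, HasDerivAt ψb (φb x) x)
    (A : κ → E) (b : κ → ℝ) {q : ι → ℝ → E} {v : ι → E} {t : ℝ}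
    (hq : ∀ i, HasDerivAt (q i) (v i) t) :
    HasDerivAt (fun s => ∑ i, ∑ n, ψb (⟪A n, q i s⟫ - b n))
      (∑ i, ⟪∑ n, φb (⟪A n, q i t⟫ - b n) • A n, v i⟫) t := by
  have hplane : ∀ i n, HasDerivAt (fun s => ⟪A n, q i s⟫ - b n) ⟪A n, v i⟫ t := fun i n => by
    simpa using ((hasDerivAt_const t (A n)).inner ℝ (hq i)).sub_const (b n)
  refine (HasDerivAt.fun_sum fun i _ => HasDerivAt.fun_sum fun n _ =>
    (hψb _).comp t (hplane i n)).congr_deriv ?_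
  simp only [sum_inner, real_inner_smul_left]

theorem hasDerivAt_kineticEnergy {w : ι → ℝ → E} {a : ι → E} {t : ℝ} (c : E)
    (hw : ∀ i, HasDerivAt (w i) (a i) t) :
    HasDerivAt (fun s => (1 / 2) * ∑ i, ‖w i s - c‖ ^ 2) (∑ i, ⟪w i t - c, a i⟫) t := by
  refine ((HasDerivAt.fun_sum fun i _ => ((hw i).sub_const c).norm_sq).const_mul
    (1 / 2 : ℝ)).congr_deriv ?_
  rw [← mul_sum]
  ring

theorem power_balance {F G v : ι → E} {vhat : E} (K : ι → ℝ)
    (hF : ∑ i, ⟪F i, vhat⟫ = 0) (hG : ∑ i, ⟪G i, vhat⟫ = 0) :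
    ∑ i, ⟪F i, v i⟫ + ∑ i, ⟪v i - vhat, -F i - G i - K i • (v i - vhat)⟫ + ∑ i, ⟪G i, v i⟫
      = -∑ i, K i * ‖v i - vhat‖ ^ 2 := by
  have hterm : ∀ i, ⟪F i, v i⟫ + ⟪v i - vhat, -F i - G i - K i • (v i - vhat)⟫ + ⟪G i, v i⟫
      = ⟪F i, vhat⟫ + ⟪G i, vhat⟫ - K i * ‖v i - vhat‖ ^ 2 := fun i => by
    have hF' : ⟪v i - vhat, F i⟫ = ⟪F i, v i⟫ - ⟪F i, vhat⟫ := by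
      rw [real_inner_comm, inner_sub_right]
    have hG' : ⟪v i - vhat, G i⟫ = ⟪G i, v i⟫ - ⟪G i, vhat⟫ := by
      rw [real_inner_comm, inner_sub_right]
    rw [inner_sub_right, inner_sub_right, inner_neg_right, real_inner_smul_right,
      real_inner_self_eq_norm_sq, hF', hG']
    ring
  rw [← sum_add_distrib, ← sum_add_distrib]
  simp only [hterm]
  rw [sum_sub_distrib, sum_add_distrib, hF, hG]
  ring

theorem hamiltonian_dissipation_general
    (N m : ℕ) (ε : ℝ) (hε : 0 < ε)
    -- agent positions and velocities
    (q qv : Fin N → ℝ → EuclideanSpace ℝ (Fin 3))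
    -- boundary planes
    (A : Fin m → EuclideanSpace ℝ (Fin 3)) (b : Fin m → ℝ)
    -- reference velocity, parallel to every boundary plane
    (vhat : EuclideanSpace ℝ (Fin 3)) (hvhat : ∀ n, ⟪A n, vhat⟫ = 0)
    -- potential functions
    (ψ ψb φ φb : ℝ → ℝ)
    (hψC1 : ContDiff ℝ 1 ψ) (hφ : deriv ψ = φ)
    (hψbC1 : ContDiff ℝ 1 ψb) (hφb : deriv ψb = φb)
    -- damping gains
    (K : Fin N → ℝ) (hK : ∀ i, 0 < K i)
    -- closed-loop double-integrator dynamics  q̈ᵢ = uᵢ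
    (hq : ∀ i t, HasDerivAt (q i) (qv i t) t)
    (hqv : ∀ i t, HasDerivAt (qv i)
      (-(∑ j ∈ univ.erase i,
          (φ ((1 / ε) * (Real.sqrt (1 + ε * ‖q i t - q j t‖ ^ 2) - 1)) *
            (Real.sqrt (1 + ε * ‖q i t - q j t‖ ^ 2))⁻¹) • (q i t - q j t))
        - (∑ n, φb (⟪A n, q i t⟫ - b n) • A n)
        - K i • (qv i t - vhat)) t)
    -- the Hamiltonian  H = V_p + V_k + V_b
    (t₀ : ℝ) (H : ℝ → ℝ)
    (hH : ∀ t, H t =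
      (1 / 2) * ∑ i, ∑ j ∈ univ.erase i,
          ψ ((1 / ε) * (Real.sqrt (1 + ε * ‖q i t - q j t‖ ^ 2) - 1))
      + (1 / 2) * ∑ i, ‖qv i t - vhat‖ ^ 2
      + ∑ i, ∑ n, ψb (⟪A n, q i t⟫ - b n)) :
    (∀ t, t₀ < t →
        HasDerivAt H (-(∑ i, K i * ‖qv i t - vhat‖ ^ 2)) t ∧
        -(∑ i, K i * ‖qv i t - vhat‖ ^ 2) ≤ 0) ∧
    AntitoneOn H (Set.Ici t₀) := by
  have hψ : ∀ x, HasDerivAt ψ (φ x) x := fun x =>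
    hφ ▸ (hψC1.differentiable one_ne_zero x).hasDerivAt
  have hψb : ∀ x, HasDerivAt ψb (φb x) x := fun x =>
    hφb ▸ (hψbC1.differentiable one_ne_zero x).hasDerivAt
  have hdiss : ∀ t, -(∑ i, K i * ‖qv i t - vhat‖ ^ 2) ≤ 0 := fun t =>
    neg_nonpos.mpr (sum_nonneg fun i _ => mul_nonneg (hK i).le (sq_nonneg _))
  have hH' : ∀ t, HasDerivAt H (-(∑ i, K i * ‖qv i t - vhat‖ ^ 2)) t := by
    intro t
    have hpair : ∑ i, ⟪∑ j ∈ univ.erase i, pairGain ε φ (q i t - q j t) • (q i t - q j t),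
        vhat⟫ = 0 :=
      sum_inner_sum_erase_smul_sub_eq_zero (fun i j => pairGain_sub_comm ε φ (q i t) (q j t)) _ _
    have hboundary : ∑ i, ⟪∑ n, φb (⟪A n, q i t⟫ - b n) • A n, vhat⟫ = 0 := by
      simp only [sum_inner, real_inner_smul_left, hvhat, mul_zero, sum_const_zero]
    rw [funext hH, ← power_balance K hpair hboundary]
    exact ((hasDerivAt_pairPotential hε hψ fun i => hq i t).add
      (hasDerivAt_kineticEnergy vhat fun i => hqv i t)).add
      (hasDerivAt_boundaryPotential hψb A b fun i => hq i t)
  exact ⟨fun t _ => ⟨hH' t, hdiss t⟩, (antitone_of_hasDerivAt_nonpos hH' hdiss).antitoneOn _⟩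

/-- Theorem 1(i): Along any solution of the closed-loop multi-sUAS
system with the APF-based control protocol, the Hamiltonian `H = V_p + V_k + V_b`
is differentiable in time and `Ḣ(t) = −Σᵢ Kᵢ ‖q̇ᵢ(t) − v̂‖² ≤ 0` for all `t > t₀`;
in particular `H` is nonincreasing. -/
theorem hamiltonian_dissipation
    (N m : ℕ) (ε : ℝ) (hε : 0 < ε)
    -- agent positions and velocities
    (q qv : Fin N → ℝ → EuclideanSpace ℝ (Fin 3))
    -- boundary planes
    (A : Fin m → EuclideanSpace ℝ (Fin 3)) (b : Fin m → ℝ)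
    (hA : ∀ n, ‖A n‖ = 1)
    -- reference velocity, parallel to every boundary plane
    (vhat : EuclideanSpace ℝ (Fin 3)) (hvhat : ∀ n, ⟪A n, vhat⟫ = 0)
    -- potential functions
    (dhat dbhat : ℝ) (ψ ψb φ φb : ℝ → ℝ)
    (hψnn : ∀ d, 0 ≤ ψ d) (hψanti : Antitone ψ)
    (hψC1 : ContDiff ℝ 1 ψ) (hφ : deriv ψ = φ)
    (hψ0 : ∀ d, ψ d = 0 ↔ dhat ≤ d) (hψpos : ∀ d, 0 < ψ d ↔ d < dhat)
    (hψbnn : ∀ d, 0 ≤ ψb d) (hψbanti : Antitone ψb)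
    (hψbC1 : ContDiff ℝ 1 ψb) (hφb : deriv ψb = φb)
    (hψb0 : ∀ d, ψb d = 0 ↔ dbhat ≤ d) (hψbpos : ∀ d, 0 < ψb d ↔ d < dbhat)
    -- damping gains
    (K : Fin N → ℝ) (hK : ∀ i, 0 < K i)
    -- closed-loop double-integrator dynamics  q̈ᵢ = uᵢ
    (hq : ∀ i t, HasDerivAt (q i) (qv i t) t)
    (hqv : ∀ i t, HasDerivAt (qv i)
      (-(∑ j ∈ univ.erase i,
          (φ ((1 / ε) * (Real.sqrt (1 + ε * ‖q i t - q j t‖ ^ 2) - 1)) *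
            (Real.sqrt (1 + ε * ‖q i t - q j t‖ ^ 2))⁻¹) • (q i t - q j t))
        - (∑ n, φb (⟪A n, q i t⟫ - b n) • A n)
        - K i • (qv i t - vhat)) t)
    -- the Hamiltonian  H = V_p + V_k + V_b
    (t₀ : ℝ) (H : ℝ → ℝ)
    (hH : ∀ t, H t =
      (1 / 2) * ∑ i, ∑ j ∈ univ.erase i,
          ψ ((1 / ε) * (Real.sqrt (1 + ε * ‖q i t - q j t‖ ^ 2) - 1))
      + (1 / 2) * ∑ i, ‖qv i t - vhat‖ ^ 2
      + ∑ i, ∑ n, ψb (⟪A n, q i t⟫ - b n)) :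
    (∀ t, t₀ < t →
        HasDerivAt H (-(∑ i, K i * ‖qv i t - vhat‖ ^ 2)) t ∧
        -(∑ i, K i * ‖qv i t - vhat‖ ^ 2) ≤ 0) ∧
    AntitoneOn H (Set.Ici t₀) :=
  hamiltonian_dissipation_general N m ε hε q qv A b vhat hvhat ψ ψb φ φb hψC1 hφ hψbC1 hφb K hK hq
    hqv t₀ H hH
end

section
/- (Theorem 2, convergence rate for the gradient Hamiltonian system) Under Assumptions 1 and 2, if Ψ(q(0)), ∇Ψ(q(0)) and q̇(0) are finite, then for every t > 0: inf_{τ ∈ (0,t)} [ p‖∇Ψ(q(τ))‖² + r‖q̇(τ)‖² ] ≤ (1/t) ( (1/2)‖α∇Ψ(q(0)) + q̇(0)‖² + (αK + 1)Ψ(q(0)) ), where p = (2KL − K²)/(4L²), r = K/4, and α = K/(2L). -/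
/-!
With `α = K/(2L)`, the Lyapunov function `V = α⟪∇Ψ(q), q̇⟫ + ‖q̇‖²/2 + (αK + 1)Ψ(q)` decreases
along a solution at rate at least `α‖∇Ψ(q)‖² + (K/2)‖q̇‖²`: substituting `q̈ = -Kq̇ - ∇Ψ(q)`, the
terms in `⟪∇Ψ(q), q̇⟫` cancel, and the Hessian term `α⟪∇²Ψ(q) q̇, q̇⟫` is at most
`αL‖q̇‖² = (K/2)‖q̇‖²`. Since `α - α² = p` and `K/2 ≥ r`, this rate dominates the integrand.
The descent lemma applied to `Ψ ≥ 0` gives `‖∇Ψ‖² ≤ 2LΨ`, which makes `V ≥ 0`, so integrating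
over `[0, t]` bounds `t` times the infimum by `V(0) ≤ ‖α∇Ψ(q 0) + q̇ 0‖²/2 + (αK + 1)Ψ(q 0)`.
-/

open Set
open scoped RealInnerProductSpace NNReal

theorem mul_sInf_image_Ioo_le_of_hasDerivAt {V V' g : ℝ → ℝ} {t : ℝ} (ht : 0 ≤ t)
    (hV : ∀ τ ∈ Icc 0 t, HasDerivAt V (V' τ) τ) (hV' : ∀ τ ∈ Ioo 0 t, V' τ ≤ -g τ)
    (h0 : 0 ≤ V 0) (ht0 : 0 ≤ V t) : t * sInf (g '' Ioo 0 t) ≤ V 0 := by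
  by_cases hbdd : BddBelow (g '' Ioo 0 t)
  swap
  · rwa [Real.sInf_of_not_bddBelow hbdd, mul_zero]
  set m := sInf (g '' Ioo 0 t)
  have hanti : AntitoneOn (fun τ => V τ + m * τ) (Icc 0 t) := by
    refine antitoneOn_of_hasDerivWithinAt_nonpos (f' := fun τ => V' τ + m) (convex_Icc 0 t)
      (fun τ hτ => ((hV τ hτ).continuousAt.add (continuousAt_const.mul continuousAt_id))
        |>.continuousWithinAt) (fun τ hτ => ?_) fun τ hτ => ?_
    all_goals rw [interior_Icc] at hτ
    · exact (((hV τ (Ioo_subset_Icc_self hτ)).add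
        ((hasDerivAt_id' τ).const_mul m)).congr_deriv (by rw [mul_one])).hasDerivWithinAt
    · linarith [hV' τ hτ, csInf_le hbdd (mem_image_of_mem g hτ)]
  have := hanti (left_mem_Icc.2 ht) (right_mem_Icc.2 ht) ht
  simp only [mul_zero, add_zero] at this
  linarith

variable {E : Type*} [NormedAddCommGroup E] [InnerProductSpace ℝ E]

theorem inner_fderiv_apply_self_le_of_lipschitzWith {g : E → E} {L : ℝ≥0}
    (hg : LipschitzWith L g) (x v : E) : ⟪fderiv ℝ g x v, v⟫ ≤ L * ‖v‖ ^ 2 :=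
  calc ⟪fderiv ℝ g x v, v⟫ ≤ ‖fderiv ℝ g x v‖ * ‖v‖ := real_inner_le_norm _ _
    _ ≤ ‖fderiv ℝ g x‖ * ‖v‖ * ‖v‖ := by gcongr; exact (fderiv ℝ g x).le_opNorm v
    _ ≤ L * ‖v‖ * ‖v‖ := by gcongr; exact norm_fderiv_le_of_lipschitz ℝ hg
    _ = L * ‖v‖ ^ 2 := by ring

variable [CompleteSpace E]

theorem le_add_inner_gradient_add_of_lipschitzWith_gradient {f : E → ℝ} {L : ℝ≥0}
    (hf : Differentiable ℝ f) (hLip : LipschitzWith L (gradient f)) (x d : E) :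
    f (x + d) ≤ f x + ⟪gradient f x, d⟫ + L / 2 * ‖d‖ ^ 2 := by
  set φ : ℝ → ℝ := fun s => f (x + s • d) - s * ⟪gradient f x, d⟫ - L / 2 * s ^ 2 * ‖d‖ ^ 2
  have hφ : ∀ s, HasDerivAt φ
      (⟪gradient f (x + s • d) - gradient f x, d⟫ - L * s * ‖d‖ ^ 2) s := by
    intro s
    have hline : HasDerivAt (fun u : ℝ => x + u • d) d s := by
      simpa using ((hasDerivAt_id s).smul_const d).const_add x
    have hcomp := (hf _).hasGradientAt.hasFDerivAt.comp_hasDerivAt s hline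
    rw [InnerProductSpace.toDual_apply_apply] at hcomp
    refine ((hcomp.sub ((hasDerivAt_id' s).mul_const ⟪gradient f x, d⟫)).sub
      (((hasDerivAt_pow 2 s).const_mul ((L : ℝ) / 2)).mul_const (‖d‖ ^ 2))).congr_deriv ?_
    rw [inner_sub_left]
    ring
  have hanti : AntitoneOn φ (Icc 0 1) := by
    refine antitoneOn_of_hasDerivWithinAt_nonpos (convex_Icc 0 1)
      (fun s _ => (hφ s).continuousAt.continuousWithinAt) (fun s _ => (hφ s).hasDerivWithinAt)
      fun s hs => ?_
    rw [interior_Icc] at hs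
    have hinc : ⟪gradient f (x + s • d) - gradient f x, d⟫ ≤ L * s * ‖d‖ ^ 2 :=
      calc ⟪gradient f (x + s • d) - gradient f x, d⟫
          ≤ ‖gradient f (x + s • d) - gradient f x‖ * ‖d‖ := real_inner_le_norm _ _
        _ ≤ L * ‖(x + s • d) - x‖ * ‖d‖ := by
          gcongr
          simpa only [dist_eq_norm] using hLip.dist_le_mul (x + s • d) x
        _ = L * s * ‖d‖ ^ 2 := by
          rw [add_sub_cancel_left, norm_smul, Real.norm_of_nonneg hs.1.le]
          ring
    linarith
  have h01 := hanti (left_mem_Icc.2 zero_le_one) (right_mem_Icc.2 zero_le_one) zero_le_one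
  simp only [φ, zero_smul, add_zero, zero_mul, sub_zero, one_smul, one_mul, one_pow,
    ne_eq, OfNat.ofNat_ne_zero, not_false_eq_true, zero_pow, mul_zero] at h01
  linarith

theorem sq_norm_gradient_le_of_nonneg {f : E → ℝ} {L : ℝ≥0} (hL : 0 < L)
    (hf : Differentiable ℝ f) (hLip : LipschitzWith L (gradient f)) (hnn : ∀ x, 0 ≤ f x)
    (x : E) : ‖gradient f x‖ ^ 2 ≤ 2 * L * f x := by
  have hL' : (0 : ℝ) < L := hL
  have h := le_add_inner_gradient_add_of_lipschitzWith_gradient hf hLip x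
    (-(L : ℝ)⁻¹ • gradient f x)
  rw [real_inner_smul_right, real_inner_self_eq_norm_sq, norm_smul, mul_pow, Real.norm_eq_abs,
    sq_abs, neg_sq] at h
  have hstep := (hnn _).trans h
  field_simp at hstep
  linarith

noncomputable def dampedGradientLyapunov (Ψ : E → ℝ) (K α : ℝ) (x v : E) : ℝ :=
  α * ⟪gradient Ψ x, v⟫ + ‖v‖ ^ 2 / 2 + (α * K + 1) * Ψ x

/-- Derivative of `dampedGradientLyapunov Ψ K α` along a path through position `x` with velocity
`v` and acceleration `a`. -/
noncomputable def dampedGradientLyapunovDeriv (Ψ : E → ℝ) (K α : ℝ) (x v a : E) : ℝ :=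
  α * (⟪gradient Ψ x, a⟫ + ⟪fderiv ℝ (gradient Ψ) x v, v⟫) + ⟪v, a⟫ +
    (α * K + 1) * ⟪gradient Ψ x, v⟫

section Lyapunov

variable {Ψ : E → ℝ} {K α : ℝ}

theorem hasDerivAt_dampedGradientLyapunov (hΨ : ContDiff ℝ 2 Ψ) {q qv : ℝ → E} {a : E} {t : ℝ}
    (hq : HasDerivAt q (qv t) t) (hqv : HasDerivAt qv a t) :
    HasDerivAt (fun τ => dampedGradientLyapunov Ψ K α (q τ) (qv τ))
      (dampedGradientLyapunovDeriv Ψ K α (q t) (qv t) a) t := by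
  have hgrad : ContDiff ℝ 1 (gradient Ψ) :=
    (InnerProductSpace.toDual ℝ E).symm.contDiff.comp (hΨ.fderiv_right (by norm_num))
  have hgradq : HasDerivAt (fun τ => gradient Ψ (q τ)) (fderiv ℝ (gradient Ψ) (q t) (qv t)) t :=
    ((hgrad.differentiable one_ne_zero) (q t)).hasFDerivAt.comp_hasDerivAt t hq
  have hΨq : HasDerivAt (fun τ => Ψ (q τ)) ⟪gradient Ψ (q t), qv t⟫ t := by
    have h := ((hΨ.differentiable (by norm_num)) (q t)).hasGradientAt.hasFDerivAt
      |>.comp_hasDerivAt t hq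
    rwa [InnerProductSpace.toDual_apply_apply] at h
  refine ((((hgradq.inner ℝ hqv).const_mul α).add (hqv.norm_sq.div_const 2)).add
    (hΨq.const_mul (α * K + 1))).congr_deriv ?_
  rw [dampedGradientLyapunovDeriv, real_inner_comm (qv t) (fderiv ℝ (gradient Ψ) (q t) (qv t))]
  ring

theorem dampedGradientLyapunovDeriv_le {L : ℝ≥0} (hLip : LipschitzWith L (gradient Ψ))
    (hα : 0 ≤ α) (hαL : 2 * L * α = K) {x v a : E} (ha : a + K • v + gradient Ψ x = 0) :
    dampedGradientLyapunovDeriv Ψ K α x v a ≤ -(α * ‖gradient Ψ x‖ ^ 2 + K / 2 * ‖v‖ ^ 2) := by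
  have ha' : a = -(K • v) - gradient Ψ x := by
    rw [← sub_eq_zero, ← ha]; abel
  have hHess := mul_le_mul_of_nonneg_left
    (inner_fderiv_apply_self_le_of_lipschitzWith hLip x v) hα
  rw [dampedGradientLyapunovDeriv, ha', inner_sub_right, inner_sub_right, inner_neg_right,
    inner_neg_right, real_inner_smul_right, real_inner_smul_right, real_inner_self_eq_norm_sq,
    real_inner_self_eq_norm_sq, real_inner_comm v]
  linear_combination hHess + (‖v‖ ^ 2 / 2) * hαL

theorem dampedGradientLyapunov_eq (Ψ : E → ℝ) (K α : ℝ) (x v : E) :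
    dampedGradientLyapunov Ψ K α x v = (1 / 2) * ‖α • gradient Ψ x + v‖ ^ 2 -
      α ^ 2 / 2 * ‖gradient Ψ x‖ ^ 2 + (α * K + 1) * Ψ x := by
  rw [dampedGradientLyapunov, norm_add_sq_real, real_inner_smul_left, norm_smul, mul_pow,
    Real.norm_eq_abs, sq_abs]
  ring

theorem dampedGradientLyapunov_le (Ψ : E → ℝ) (K α : ℝ) (x v : E) :
    dampedGradientLyapunov Ψ K α x v ≤
      (1 / 2) * ‖α • gradient Ψ x + v‖ ^ 2 + (α * K + 1) * Ψ x := by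
  rw [dampedGradientLyapunov_eq]
  nlinarith [sq_nonneg α, sq_nonneg ‖gradient Ψ x‖]

theorem dampedGradientLyapunov_nonneg {L : ℝ≥0} (hαL : 2 * L * α = K) {x : E} (v : E)
    (hΨx : 0 ≤ Ψ x) (hgrad : ‖gradient Ψ x‖ ^ 2 ≤ 2 * L * Ψ x) :
    0 ≤ dampedGradientLyapunov Ψ K α x v := by
  have hαK : α ^ 2 * ‖gradient Ψ x‖ ^ 2 ≤ α * K * Ψ x := by
    rw [← hαL]
    nlinarith [mul_le_mul_of_nonneg_left hgrad (sq_nonneg α)]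
  rw [dampedGradientLyapunov_eq]
  nlinarith [sq_nonneg ‖α • gradient Ψ x + v‖, sq_nonneg α, L.2]

end Lyapunov

theorem gradient_hamiltonian_convergence_rate_general
    (n : ℕ) (K L : ℝ) (hK0 : 0 < K) (hL : 0 < L)
    (Ψ : EuclideanSpace ℝ (Fin n) → ℝ)
    (hΨ : ContDiff ℝ 2 Ψ) (hΨnn : ∀ x, 0 ≤ Ψ x)
    -- Assumption 1: ∇Ψ is Lipschitz with constant L
    (hLip : LipschitzWith (Real.toNNReal L) (gradient Ψ))
    -- a solution of the gradient Hamiltonian system  q̈ + Kq̇ + ∇Ψ(q) = 0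
    (q qv qa : ℝ → EuclideanSpace ℝ (Fin n))
    (hq : ∀ t, HasDerivAt q (qv t) t)
    (hqv : ∀ t, HasDerivAt qv (qa t) t)
    (hsys : ∀ t, qa t + K • qv t + gradient Ψ (q t) = 0)
    (p r α : ℝ)
    (hp : p = (2 * K * L - K ^ 2) / (4 * L ^ 2)) (hr : r = K / 4)
    (hα : α = K / (2 * L)) :
    ∀ t : ℝ, 0 < t →
      sInf ((fun τ => p * ‖gradient Ψ (q τ)‖ ^ 2 + r * ‖qv τ‖ ^ 2) ''
          Set.Ioo 0 t) ≤
        (1 / t) * ((1 / 2) * ‖α • gradient Ψ (q 0) + qv 0‖ ^ 2 +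
          (α * K + 1) * Ψ (q 0)) := by
  intro t ht
  have hα0 : 0 ≤ α := by rw [hα]; positivity
  have hαL : 2 * (L.toNNReal : ℝ) * α = K := by
    rw [Real.coe_toNNReal L hL.le, hα]; field_simp
  have hpα : p = α - α ^ 2 := by rw [hp, hα]; field_simp; ring
  have hV : ∀ τ, 0 ≤ dampedGradientLyapunov Ψ K α (q τ) (qv τ) := fun τ =>
    dampedGradientLyapunov_nonneg hαL _ (hΨnn _) <| sq_norm_gradient_le_of_nonneg
      (Real.toNNReal_pos.2 hL) (hΨ.differentiable (by norm_num)) hLip hΨnn _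
  have hdecay : ∀ τ, dampedGradientLyapunovDeriv Ψ K α (q τ) (qv τ) (qa τ) ≤
      -(p * ‖gradient Ψ (q τ)‖ ^ 2 + r * ‖qv τ‖ ^ 2) := fun τ => by
    have hrate := dampedGradientLyapunovDeriv_le hLip hα0 hαL (hsys τ)
    nlinarith [sq_nonneg α, sq_nonneg ‖gradient Ψ (q τ)‖, sq_nonneg ‖qv τ‖,
      mul_nonneg (sq_nonneg α) (sq_nonneg ‖gradient Ψ (q τ)‖)]
  have key := mul_sInf_image_Ioo_le_of_hasDerivAt ht.le
    (fun τ _ => hasDerivAt_dampedGradientLyapunov hΨ (hq τ) (hqv τ)) (fun τ _ => hdecay τ)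
    (hV 0) (hV t)
  rw [one_div_mul_eq_div, le_div_iff₀ ht, mul_comm]
  exact key.trans (dampedGradientLyapunov_le _ _ _ _ _)

/-- Theorem 2, convergence rate for the gradient Hamiltonian
system: under Assumptions 1 and 2, for every `t > 0`,
`inf_{τ ∈ (0,t)} [p‖∇Ψ(q(τ))‖² + r‖q̇(τ)‖²]
  ≤ (1/t)((1/2)‖α∇Ψ(q(0)) + q̇(0)‖² + (αK + 1)Ψ(q(0)))`,
where `p = (2KL − K²)/(4L²)`, `r = K/4`, `α = K/(2L)`. -/
theorem gradient_hamiltonian_convergence_rate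
    (n : ℕ) (K L : ℝ) (hK0 : 0 < K) (hL : 0 < L)
    -- Assumption 2: K > √(1/(4L))
    (hKL : Real.sqrt (1 / (4 * L)) < K)
    (Ψ : EuclideanSpace ℝ (Fin n) → ℝ)
    (hΨ : ContDiff ℝ 2 Ψ) (hΨnn : ∀ x, 0 ≤ Ψ x)
    -- Assumption 1: ∇Ψ is Lipschitz with constant L
    (hLip : LipschitzWith (Real.toNNReal L) (gradient Ψ))
    -- a solution of the gradient Hamiltonian system  q̈ + Kq̇ + ∇Ψ(q) = 0
    (q qv qa : ℝ → EuclideanSpace ℝ (Fin n))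
    (hq : ∀ t, HasDerivAt q (qv t) t)
    (hqv : ∀ t, HasDerivAt qv (qa t) t)
    (hsys : ∀ t, qa t + K • qv t + gradient Ψ (q t) = 0)
    (p r α : ℝ)
    (hp : p = (2 * K * L - K ^ 2) / (4 * L ^ 2)) (hr : r = K / 4)
    (hα : α = K / (2 * L)) :
    ∀ t : ℝ, 0 < t →
      sInf ((fun τ => p * ‖gradient Ψ (q τ)‖ ^ 2 + r * ‖qv τ‖ ^ 2) ''
          Set.Ioo 0 t) ≤
        (1 / t) * ((1 / 2) * ‖α • gradient Ψ (q 0) + qv 0‖ ^ 2 +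
          (α * K + 1) * Ψ (q 0)) :=
  gradient_hamiltonian_convergence_rate_general n K L hK0 hL Ψ hΨ hΨnn hLip q qv qa hq hqv hsys p r
    α hp hr hα
end

section
/- (Integral dissipation bound from the proof of Theorem 2) Under Assumptions 1 and 2, with p = (2KL − K²)/(4L²), r = K/4, and α = K/(2L), every solution of the gradient Hamiltonian system satisfies, for all t > 0: ∫₀ᵗ ( p‖∇Ψ(q(τ))‖² + r‖q̇(τ)‖² ) dτ ≤ (1/2)‖α∇Ψ(q(0)) + q̇(0)‖² + (αK + 1)Ψ(q(0)). -/
/-!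
Along a solution, `W = ‖q̇‖²/2 + α⟪∇Ψ(q), q̇⟫ + (αK + 1)Ψ(q)` has derivative
`α⟪D∇Ψ(q) q̇, q̇⟫ - α‖∇Ψ(q)‖² - K‖q̇‖²`. As `‖D∇Ψ‖ ≤ L`, `αL = K/2` and `p = α - α²`, this is at most
`-(p‖∇Ψ(q)‖² + r‖q̇‖²)`, so the integral is bounded by `W(0) - W(t)`. Writing
`W = ‖α∇Ψ(q) + q̇‖²/2 - α²‖∇Ψ(q)‖²/2 + (αK + 1)Ψ(q)`, the descent-lemma bound `‖∇Ψ‖² ≤ 2LΨ` for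
nonnegative `Ψ` gives `W(t) ≥ 0`, and dropping the negative term bounds `W(0)` by the right-hand side.
-/

open Set intervalIntegral
open scoped NNReal RealInnerProductSpace Gradient

variable {E : Type*} [NormedAddCommGroup E] [InnerProductSpace ℝ E] [CompleteSpace E]
  {Ψ : E → ℝ}

theorem ContDiff.differentiable_gradient (hΨ : ContDiff ℝ 2 Ψ) : Differentiable ℝ (∇ Ψ) :=
  ((InnerProductSpace.toDual ℝ E).symm.toContinuousLinearEquiv.contDiff.comp
    (hΨ.fderiv_right (m := 1) (by norm_num))).differentiable one_ne_zero

theorem HasGradientAt.comp_hasDerivAt {f : E → ℝ} {g : ℝ → E} {f' g' : E} {t : ℝ}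
    (hf : HasGradientAt f f' (g t)) (hg : HasDerivAt g g' t) :
    HasDerivAt (fun s => f (g s)) ⟪f', g'⟫ t :=
  (hasGradientAt_iff_hasFDerivAt.1 hf).comp_hasDerivAt t hg

theorem le_add_inner_gradient_add_of_lipschitzWith {L : ℝ≥0} (hΨ : Differentiable ℝ Ψ)
    (hLip : LipschitzWith L (∇ Ψ)) (x u : E) :
    Ψ (x + u) ≤ Ψ x + ⟪∇ Ψ x, u⟫ + L / 2 * ‖u‖ ^ 2 := by
  set φ : ℝ → ℝ := fun s => Ψ (x + s • u) - s * ⟪∇ Ψ x, u⟫ - L / 2 * s ^ 2 * ‖u‖ ^ 2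
  have hφ (s : ℝ) : HasDerivAt φ (⟪∇ Ψ (x + s • u) - ∇ Ψ x, u⟫ - L * s * ‖u‖ ^ 2) s := by
    have hline : HasDerivAt (fun s : ℝ => x + s • u) u s := by
      simpa using ((hasDerivAt_id s).smul_const u).const_add x
    refine ((((hΨ _).hasGradientAt.comp_hasDerivAt hline).sub
      ((hasDerivAt_id s).mul_const ⟪∇ Ψ x, u⟫)).sub
      (((hasDerivAt_pow 2 s).const_mul (L / 2 : ℝ)).mul_const (‖u‖ ^ 2))).congr_deriv ?_
    rw [inner_sub_left, Nat.cast_ofNat]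
    ring
  have hφ_nonpos (s : ℝ) (hs : 0 ≤ s) : ⟪∇ Ψ (x + s • u) - ∇ Ψ x, u⟫ - L * s * ‖u‖ ^ 2 ≤ 0 := by
    have : ⟪∇ Ψ (x + s • u) - ∇ Ψ x, u⟫ ≤ L * s * ‖u‖ ^ 2 := calc
      _ ≤ ‖∇ Ψ (x + s • u) - ∇ Ψ x‖ * ‖u‖ := real_inner_le_norm _ _
      _ ≤ L * ‖s • u‖ * ‖u‖ := by
          gcongr; simpa using hLip.norm_sub_le (x + s • u) x
      _ = L * s * ‖u‖ ^ 2 := by rw [norm_smul, Real.norm_of_nonneg hs]; ring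
    linarith
  have hanti : AntitoneOn φ (Ici 0) := by
    refine antitoneOn_of_hasDerivWithinAt_nonpos (convex_Ici 0)
      (fun s _ => (hφ s).continuousAt.continuousWithinAt) (fun s _ => (hφ s).hasDerivWithinAt)
      fun s hs => hφ_nonpos s ?_
    rw [interior_Ici] at hs
    exact hs.le
  have := hanti (mem_Ici.2 le_rfl) (mem_Ici.2 zero_le_one) zero_le_one
  simp only [φ, one_smul, zero_smul, add_zero] at this
  linarith

theorem sq_norm_gradient_le_of_lipschitzWith {L : ℝ≥0} (hL : 0 < L) (hΨ : Differentiable ℝ Ψ)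
    (hΨnn : ∀ x, 0 ≤ Ψ x) (hLip : LipschitzWith L (∇ Ψ)) (x : E) :
    ‖∇ Ψ x‖ ^ 2 ≤ 2 * L * Ψ x := by
  -- the gradient step of length `1 / L` lowers `Ψ` by `‖∇Ψ x‖² / (2L)`, and `Ψ` stays nonnegative
  have hstep := le_add_inner_gradient_add_of_lipschitzWith hΨ hLip x (-(L : ℝ)⁻¹ • ∇ Ψ x)
  have hnn := hΨnn (x + -(L : ℝ)⁻¹ • ∇ Ψ x)
  generalize Ψ (x + -(L : ℝ)⁻¹ • ∇ Ψ x) = y at hstep hnn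
  rw [inner_smul_right, real_inner_self_eq_norm_sq, norm_smul, mul_pow, norm_neg,
    norm_inv, NNReal.norm_eq] at hstep
  have hL' : (0 : ℝ) < L := hL
  field_simp at hstep
  nlinarith

noncomputable def dampedLyapunov (Ψ : E → ℝ) (K α : ℝ) (x v : E) : ℝ :=
  ‖v‖ ^ 2 / 2 + α * ⟪∇ Ψ x, v⟫ + (α * K + 1) * Ψ x

section dampedLyapunov

variable {K α : ℝ}

theorem dampedLyapunov_eq (x v : E) :
    dampedLyapunov Ψ K α x v =
      ‖α • ∇ Ψ x + v‖ ^ 2 / 2 - α ^ 2 / 2 * ‖∇ Ψ x‖ ^ 2 + (α * K + 1) * Ψ x := by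
  rw [dampedLyapunov, norm_add_sq_real, norm_smul, inner_smul_left, Real.norm_eq_abs, mul_pow,
    sq_abs]
  simp only [conj_trivial]
  ring

theorem dampedLyapunov_le (x v : E) :
    dampedLyapunov Ψ K α x v ≤ ‖α • ∇ Ψ x + v‖ ^ 2 / 2 + (α * K + 1) * Ψ x := by
  rw [dampedLyapunov_eq]
  nlinarith [sq_nonneg α, sq_nonneg ‖∇ Ψ x‖]

theorem dampedLyapunov_nonneg {L : ℝ} {x : E} (hgrad : ‖∇ Ψ x‖ ^ 2 ≤ 2 * L * Ψ x)
    (hΨx : 0 ≤ Ψ x) (hα : α ^ 2 * L ≤ α * K + 1) (v : E) : 0 ≤ dampedLyapunov Ψ K α x v := by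
  rw [dampedLyapunov_eq]
  nlinarith [sq_nonneg ‖α • ∇ Ψ x + v‖, mul_le_mul_of_nonneg_left hgrad (sq_nonneg α),
    mul_le_mul_of_nonneg_right hα hΨx]

theorem hasDerivAt_dampedLyapunov (hΨ : Differentiable ℝ Ψ) (hg : Differentiable ℝ (∇ Ψ))
    {q v : ℝ → E} {a : E} {t : ℝ} (hq : HasDerivAt q (v t) t) (hv : HasDerivAt v a t)
    (hsys : a + K • v t + ∇ Ψ (q t) = 0) :
    HasDerivAt (fun s => dampedLyapunov Ψ K α (q s) (v s))
      (α * ⟪fderiv ℝ (∇ Ψ) (q t) (v t), v t⟫ - α * ‖∇ Ψ (q t)‖ ^ 2 - K * ‖v t‖ ^ 2) t := by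
  have ha : a = -(K • v t) - ∇ Ψ (q t) := by rw [← sub_eq_zero, ← hsys]; abel
  have hgq : HasDerivAt (fun s => ∇ Ψ (q s)) (fderiv ℝ (∇ Ψ) (q t) (v t)) t :=
    (hg _).hasFDerivAt.comp_hasDerivAt t hq
  refine ((((hv.norm_sq).div_const 2).add ((hgq.inner ℝ hv).const_mul α)).add
    (((hΨ _).hasGradientAt.comp_hasDerivAt hq).const_mul (α * K + 1))).congr_deriv ?_
  rw [ha]
  simp only [inner_smul_right, inner_sub_right, inner_neg_right, real_inner_self_eq_norm_sq,
    real_inner_comm (v t)]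
  ring

theorem integral_le_dampedLyapunov_sub {L : ℝ≥0} (hΨ : ContDiff ℝ 2 Ψ)
    (hLip : LipschitzWith L (∇ Ψ)) {q v a : ℝ → E} (hq : ∀ t, HasDerivAt q (v t) t)
    (hv : ∀ t, HasDerivAt v (a t) t) (hsys : ∀ t, a t + K • v t + ∇ Ψ (q t) = 0)
    {p r : ℝ} (hα : 0 ≤ α) (hp : p ≤ α) (hr : α * L + r ≤ K) {t : ℝ} (ht : 0 ≤ t) :
    ∫ τ in 0..t, (p * ‖∇ Ψ (q τ)‖ ^ 2 + r * ‖v τ‖ ^ 2) ≤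
      dampedLyapunov Ψ K α (q 0) (v 0) - dampedLyapunov Ψ K α (q t) (v t) := by
  have hW (s : ℝ) := hasDerivAt_dampedLyapunov (α := α) (hΨ.differentiable two_ne_zero)
    hΨ.differentiable_gradient (hq s) (hv s) (hsys s)
  have hrate (s : ℝ) : p * ‖∇ Ψ (q s)‖ ^ 2 + r * ‖v s‖ ^ 2 ≤
      -(α * ⟪fderiv ℝ (∇ Ψ) (q s) (v s), v s⟫ - α * ‖∇ Ψ (q s)‖ ^ 2 - K * ‖v s‖ ^ 2) := by
    have hG : ⟪fderiv ℝ (∇ Ψ) (q s) (v s), v s⟫ ≤ L * ‖v s‖ ^ 2 := calc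
      _ ≤ ‖fderiv ℝ (∇ Ψ) (q s)‖ * ‖v s‖ * ‖v s‖ :=
          (real_inner_le_norm _ _).trans (by gcongr; exact ContinuousLinearMap.le_opNorm _ _)
      _ ≤ L * ‖v s‖ * ‖v s‖ := by gcongr; exact norm_fderiv_le_of_lipschitz ℝ hLip
      _ = L * ‖v s‖ ^ 2 := by ring
    nlinarith [mul_le_mul_of_nonneg_left hG hα, sq_nonneg ‖∇ Ψ (q s)‖, sq_nonneg ‖v s‖]
  have hcont : Continuous fun τ => p * ‖∇ Ψ (q τ)‖ ^ 2 + r * ‖v τ‖ ^ 2 := by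
    have hqc : Continuous q := continuous_iff_continuousAt.2 fun s => (hq s).continuousAt
    have hvc : Continuous v := continuous_iff_continuousAt.2 fun s => (hv s).continuousAt
    have hgc : Continuous (∇ Ψ) := hLip.continuous
    fun_prop
  have := integral_le_sub_of_hasDeriv_right_of_le ht
    (fun s _ => (hW s).neg.continuousAt.continuousWithinAt) (fun s _ => (hW s).neg.hasDerivWithinAt)
    hcont.integrableOn_Icc fun s _ => hrate s
  simpa only [Pi.neg_apply, neg_sub_neg] using this

end dampedLyapunov

theorem gradient_hamiltonian_integral_dissipation_general
    (n : ℕ) (K L : ℝ) (hK0 : 0 < K) (hL : 0 < L)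
    (Ψ : EuclideanSpace ℝ (Fin n) → ℝ)
    (hΨ : ContDiff ℝ 2 Ψ) (hΨnn : ∀ x, 0 ≤ Ψ x)
    -- Assumption 1: ∇Ψ is Lipschitz with constant L
    (hLip : LipschitzWith (Real.toNNReal L) (gradient Ψ))
    -- a solution of the gradient Hamiltonian system  q̈ + Kq̇ + ∇Ψ(q) = 0
    (q qv qa : ℝ → EuclideanSpace ℝ (Fin n))
    (hq : ∀ t, HasDerivAt q (qv t) t)
    (hqv : ∀ t, HasDerivAt qv (qa t) t)
    (hsys : ∀ t, qa t + K • qv t + gradient Ψ (q t) = 0)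
    (p r α : ℝ)
    (hp : p = (2 * K * L - K ^ 2) / (4 * L ^ 2)) (hr : r = K / 4)
    (hα : α = K / (2 * L)) :
    ∀ t : ℝ, 0 < t →
      (∫ τ in (0 : ℝ)..t, (p * ‖gradient Ψ (q τ)‖ ^ 2 + r * ‖qv τ‖ ^ 2)) ≤
        (1 / 2) * ‖α • gradient Ψ (q 0) + qv 0‖ ^ 2 + (α * K + 1) * Ψ (q 0) := by
  intro t ht
  lift L to ℝ≥0 using hL.le
  rw [Real.toNNReal_coe] at hLip
  have hα0 : 0 ≤ α := by rw [hα]; positivity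
  have hαL : α * L = K / 2 := by rw [hα]; field_simp
  have hpα : p = α - α ^ 2 := by rw [hp, hα]; field_simp; ring
  have hgrad := sq_norm_gradient_le_of_lipschitzWith (NNReal.coe_pos.1 hL)
    (hΨ.differentiable two_ne_zero) hΨnn hLip (q t)
  calc _ ≤ dampedLyapunov Ψ K α (q 0) (qv 0) - dampedLyapunov Ψ K α (q t) (qv t) :=
        integral_le_dampedLyapunov_sub hΨ hLip hq hqv hsys hα0 (by nlinarith) (by linarith) ht.le
    _ ≤ dampedLyapunov Ψ K α (q 0) (qv 0) :=
        sub_le_self _ (dampedLyapunov_nonneg hgrad (hΨnn _) (by nlinarith) _)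
    _ ≤ _ := (dampedLyapunov_le _ _).trans_eq (by ring)

/-- integral dissipation bound from the proof of Theorem 2:
under Assumptions 1 and 2, with `p = (2KL − K²)/(4L²)`, `r = K/4`, `α = K/(2L)`,
every solution satisfies, for all `t > 0`,
`∫₀ᵗ (p‖∇Ψ(q(τ))‖² + r‖q̇(τ)‖²) dτ
  ≤ (1/2)‖α∇Ψ(q(0)) + q̇(0)‖² + (αK + 1)Ψ(q(0))`. -/
theorem gradient_hamiltonian_integral_dissipation
    (n : ℕ) (K L : ℝ) (hK0 : 0 < K) (hL : 0 < L)
    -- Assumption 2: K > √(1/(4L))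
    (hKL : Real.sqrt (1 / (4 * L)) < K)
    (Ψ : EuclideanSpace ℝ (Fin n) → ℝ)
    (hΨ : ContDiff ℝ 2 Ψ) (hΨnn : ∀ x, 0 ≤ Ψ x)
    -- Assumption 1: ∇Ψ is Lipschitz with constant L
    (hLip : LipschitzWith (Real.toNNReal L) (gradient Ψ))
    -- a solution of the gradient Hamiltonian system  q̈ + Kq̇ + ∇Ψ(q) = 0
    (q qv qa : ℝ → EuclideanSpace ℝ (Fin n))
    (hq : ∀ t, HasDerivAt q (qv t) t)
    (hqv : ∀ t, HasDerivAt qv (qa t) t)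
    (hsys : ∀ t, qa t + K • qv t + gradient Ψ (q t) = 0)
    (p r α : ℝ)
    (hp : p = (2 * K * L - K ^ 2) / (4 * L ^ 2)) (hr : r = K / 4)
    (hα : α = K / (2 * L)) :
    ∀ t : ℝ, 0 < t →
      (∫ τ in (0 : ℝ)..t, (p * ‖gradient Ψ (q τ)‖ ^ 2 + r * ‖qv τ‖ ^ 2)) ≤
        (1 / 2) * ‖α • gradient Ψ (q 0) + qv 0‖ ^ 2 + (α * K + 1) * Ψ (q 0) :=
  gradient_hamiltonian_integral_dissipation_general n K L hK0 hL Ψ hΨ hΨnn hLip q qv qa hq hqv hsys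
    p r α hp hr hα
end
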